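/- Let D₀ be any linear subspace of ℝⁿ. For each p, q ∈ (0,∞)ⁿ there exists a unique x ∈ (0,∞)ⁿ such that x − p ∈ D₀ and ρ⃗(x) − ρ⃗(q) ∈ D₀^⊥ (the orthogonal complement of D₀). -/

import Mathlib

/-!
Write `σ : ℝ → (0, ∞)` for the inverse of `ρ`; it is an order isomorphism, hence continuous.
Instead of `x` we look for `y = ρ⃗(x)`, which ranges over the whole affine space `ρ⃗(q) + D₀ᗮ`, so
there is no boundary to control. On that space we minimise `G(y) = ∑ₖ ∫₀^{yₖ} (σ - pₖ)`. Since
`σ → 0` at `-∞` and `σ → ∞` at `+∞`, every summand is coercive, so a minimiser exists; at it, the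
gradient `σ⃗(y) - p` is orthogonal to `D₀ᗮ`, i.e. lies in `D₀`, and `x = σ⃗(y)` is a solution.
Uniqueness comes from monotonicity: for two solutions `x, x'` the sum
`∑ₖ (xₖ - x'ₖ) (ρ(xₖ) - ρ(x'ₖ))` is an inner product of a vector of `D₀` with one of `D₀ᗮ`,
hence zero, while each of its terms is positive unless `xₖ = x'ₖ`.
-/

open Filter Topology Set MeasureTheory intervalIntegral

theorem tendsto_integral_atTop_of_eventually_const_le {h : ℝ → ℝ} (hh : Continuous h) (a : ℝ)
    {ε : ℝ} (hε : 0 < ε) (h_top : ∀ᶠ s in atTop, ε ≤ h s) :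
    Tendsto (fun t => ∫ s in a..t, h s) atTop atTop := by
  obtain ⟨T, hT⟩ := eventually_atTop.mp h_top
  have h_lin : Tendsto (fun t => (∫ s in a..T, h s) + ε * (t - T)) atTop atTop :=
    tendsto_atTop_add_const_left _ _
      ((tendsto_atTop_add_const_right _ _ tendsto_id).const_mul_atTop hε)
  refine tendsto_atTop_mono' _ ?_ h_lin
  filter_upwards [eventually_ge_atTop T] with t ht
  have h_tail : ε * (t - T) ≤ ∫ s in T..t, h s := by
    simpa [mul_comm] using integral_mono_on ht (intervalIntegrable_const (μ := volume))
      (hh.intervalIntegrable T t) fun s hs => hT s hs.1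
  rw [← integral_add_adjacent_intervals (hh.intervalIntegrable a T) (hh.intervalIntegrable T t)]
  linarith

theorem tendsto_integral_cocompact_atTop {h : ℝ → ℝ} (hh : Continuous h) (a : ℝ)
    {ε : ℝ} (hε : 0 < ε) (h_bot : ∀ᶠ s in atBot, h s ≤ -ε) (h_top : ∀ᶠ s in atTop, ε ≤ h s) :
    Tendsto (fun t => ∫ s in a..t, h s) (cocompact ℝ) atTop := by
  rw [cocompact_eq_atBot_atTop, tendsto_sup]
  refine ⟨?_, tendsto_integral_atTop_of_eventually_const_le hh a hε h_top⟩
  have h_refl : Tendsto (fun t => ∫ s in -a..t, -h (-s)) atTop atTop := by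
    refine tendsto_integral_atTop_of_eventually_const_le (hh.comp continuous_neg).neg (-a) hε ?_
    filter_upwards [tendsto_neg_atTop_atBot.eventually h_bot] with s hs
    simp only [Pi.neg_apply, Function.comp_apply]
    linarith
  have h_eq : ∀ t, ∫ s in -a..-t, -h (-s) = ∫ s in a..t, h s := fun t => by
    rw [intervalIntegral.integral_neg, integral_comp_neg, neg_neg, integral_symm, neg_neg, neg_neg]
  simpa only [Function.comp_def, h_eq] using h_refl.comp tendsto_neg_atBot_atTop

theorem tendsto_sum_cocompact_atTop {ι : Type*} [Fintype ι] {X : ι → Type*}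
    [∀ i, TopologicalSpace (X i)] {g : ∀ i, X i → ℝ} (hbdd : ∀ i, BddBelow (range (g i)))
    (hg : ∀ i, Tendsto (g i) (cocompact (X i)) atTop) :
    Tendsto (fun x : ∀ i, X i => ∑ i, g i (x i)) (cocompact (∀ i, X i)) atTop := by
  classical
  choose B hB using hbdd
  rw [← coprodᵢ_cocompact, Filter.coprodᵢ, tendsto_iSup]
  intro i
  refine tendsto_atTop_mono (fun x => ?_)
    (tendsto_atTop_add_const_right _ (∑ j ∈ Finset.univ.erase i, B j)
      ((hg i).comp tendsto_comap))
  rw [← Finset.add_sum_erase _ _ (Finset.mem_univ i)]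
  exact add_le_add_right (Finset.sum_le_sum fun j _ => hB j (mem_range_self _)) _

theorem Submodule.exists_forall_le_add {E : Type*} [NormedAddCommGroup E] [NormedSpace ℝ E]
    [FiniteDimensional ℝ E] {f : E → ℝ} (hf : Continuous f) (hlim : Tendsto f (cocompact E) atTop)
    (K : Submodule ℝ E) (y₀ : E) : ∃ y, y - y₀ ∈ K ∧ ∀ w ∈ K, f y ≤ f (y + w) := by
  have h_emb : IsClosedEmbedding fun v : K => y₀ + (v : E) :=
    (Homeomorph.addLeft y₀).isClosedEmbedding.comp
      K.closed_of_finiteDimensional.isClosedEmbedding_subtypeVal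
  obtain ⟨v, hv⟩ := (hf.comp h_emb.continuous).exists_forall_le
    (hlim.comp h_emb.tendsto_cocompact)
  refine ⟨y₀ + v, by simp, fun w hw => ?_⟩
  simpa [add_assoc] using hv (v + ⟨w, hw⟩)

theorem Submodule.fderiv_apply_eq_zero_of_forall_le_add {E : Type*} [NormedAddCommGroup E]
    [NormedSpace ℝ E] {f : E → ℝ} {f' : E →L[ℝ] ℝ} {y : E} (hf : HasFDerivAt f f' y)
    (K : Submodule ℝ E) (hmin : ∀ w ∈ K, f y ≤ f (y + w)) {w : E} (hw : w ∈ K) : f' w = 0 := by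
  have h_arg : HasDerivAt (fun t : ℝ => y + t • w) w 0 := by
    simpa using ((hasDerivAt_id (0 : ℝ)).smul_const w).const_add y
  refine IsLocalMin.hasDerivAt_eq_zero (Eventually.of_forall fun t => ?_)
    (hf.comp_hasDerivAt_of_eq (0 : ℝ) h_arg (by simp))
  simpa using hmin _ (K.smul_mem t hw)

theorem StrictMonoOn.exists_continuous_rightInverse_Ioi {ρ : ℝ → ℝ} (hρ : StrictMonoOn ρ (Ioi 0))
    (hsurj : SurjOn ρ (Ioi 0) univ) :
    ∃ σ : ℝ → ℝ, Continuous σ ∧ (∀ y, 0 < σ y) ∧ (∀ y, ρ (σ y) = y) ∧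
      Tendsto σ atBot (𝓝 0) ∧ Tendsto σ atTop atTop := by
  let e : Ioi (0 : ℝ) ≃o ℝ := StrictMono.orderIsoOfSurjective (fun x => ρ x)
    (fun x y hxy => hρ x.2 y.2 hxy)
    (fun y => by obtain ⟨x, hx, rfl⟩ := hsurj (mem_univ y); exact ⟨⟨x, hx⟩, rfl⟩)
  refine ⟨fun y => e.symm y, continuous_subtype_val.comp e.symm.continuous, fun y => (e.symm y).2,
    e.apply_symm_apply, ?_, tendsto_Ioi_atTop.mp e.symm.tendsto_atTop⟩
  exact ((tendsto_Ioi_atBot (a := (0 : ℝ))).1 e.symm.tendsto_atBot).mono_right nhdsWithin_le_nhds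

section EuclideanSpace

variable {ι : Type*} [Fintype ι]

theorem exists_sub_mem_and_mem_orthogonal_of_tendsto_integral {h : ι → ℝ → ℝ}
    (hh : ∀ i, Continuous (h i))
    (hcoer : ∀ i, Tendsto (fun t => ∫ s in (0 : ℝ)..t, h i s) (cocompact ℝ) atTop)
    (K : Submodule ℝ (EuclideanSpace ℝ ι)) (y₀ : EuclideanSpace ℝ ι) :
    ∃ y : EuclideanSpace ℝ ι, y - y₀ ∈ K ∧ WithLp.toLp 2 (fun i => h i (y i)) ∈ Kᗮ := by
  set G : EuclideanSpace ℝ ι → ℝ := fun y => ∑ i, ∫ s in (0 : ℝ)..y i, h i s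
  have hG_cont : Continuous G := by fun_prop
  have hG_lim : Tendsto G (cocompact _) atTop := by
    have hbdd : ∀ i, BddBelow (range fun t => ∫ s in (0 : ℝ)..t, h i s) := fun i => by
      obtain ⟨t, ht⟩ := (continuous_primitive (hh i).intervalIntegrable 0).exists_forall_le
        (hcoer i)
      exact ⟨_, forall_mem_range.2 ht⟩
    rw [← (PiLp.homeomorph 2 fun _ : ι => ℝ).comap_cocompact]
    exact (tendsto_sum_cocompact_atTop hbdd hcoer).comp tendsto_comap
  have hG_deriv : ∀ y, HasFDerivAt G (∑ i, h i (y i) • EuclideanSpace.proj (𝕜 := ℝ) i) y :=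
    fun y => HasFDerivAt.fun_sum fun i _ => by
      exact ((hh i).integral_hasStrictDerivAt 0 (y i)).hasDerivAt.comp_hasFDerivAt y
        (EuclideanSpace.proj (𝕜 := ℝ) i).hasFDerivAt
  obtain ⟨y, hy, hmin⟩ := K.exists_forall_le_add hG_cont hG_lim y₀
  refine ⟨y, hy, (K.mem_orthogonal _).2 fun w hw => ?_⟩
  simpa [PiLp.inner_apply] using K.fderiv_apply_eq_zero_of_forall_le_add (hG_deriv y) hmin hw

theorem StrictMonoOn.exists_pos_sub_mem_and_mem_orthogonal {ρ : ℝ → ℝ}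
    (hρ : StrictMonoOn ρ (Ioi 0)) (hsurj : SurjOn ρ (Ioi 0) univ)
    (D : Submodule ℝ (EuclideanSpace ℝ ι)) {p : EuclideanSpace ℝ ι} (hp : ∀ i, 0 < p i)
    (q : EuclideanSpace ℝ ι) :
    ∃ x : EuclideanSpace ℝ ι, (∀ i, 0 < x i) ∧ x - p ∈ D ∧
      WithLp.toLp 2 (fun i => ρ (x i) - ρ (q i)) ∈ Dᗮ := by
  obtain ⟨σ, hσ_cont, hσ_pos, hρσ, hσ_bot, hσ_top⟩ := hρ.exists_continuous_rightInverse_Ioi hsurj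
  have hh : ∀ i, Continuous fun s => σ s - p i := fun i => by fun_prop
  have hcoer : ∀ i, Tendsto (fun t => ∫ s in (0 : ℝ)..t, σ s - p i) (cocompact ℝ) atTop := by
    intro i
    refine tendsto_integral_cocompact_atTop (hh i) 0 (half_pos (hp i)) ?_ ?_
    · filter_upwards [hσ_bot.eventually (gt_mem_nhds (half_pos (hp i)))] with s hs
      linarith
    · filter_upwards [hσ_top.eventually_ge_atTop (p i + p i / 2)] with s hs
      linarith
  obtain ⟨y, hy, hσy⟩ := exists_sub_mem_and_mem_orthogonal_of_tendsto_integral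
    hh hcoer Dᗮ (WithLp.toLp 2 fun i => ρ (q i))
  refine ⟨WithLp.toLp 2 fun i => σ (y i), fun i => hσ_pos _, ?_, ?_⟩
  · rw [D.orthogonal_orthogonal] at hσy
    convert hσy using 1
    ext i
    simp
  · convert hy using 1
    ext i
    simp [hρσ]

theorem StrictMonoOn.eq_of_sub_mem_of_sub_mem_orthogonal {ρ : ℝ → ℝ} {S : Set ℝ}
    (hρ : StrictMonoOn ρ S) (D : Submodule ℝ (EuclideanSpace ℝ ι)) {p q x x' : EuclideanSpace ℝ ι}
    (hxS : ∀ i, x i ∈ S) (hx'S : ∀ i, x' i ∈ S) (hx : x - p ∈ D) (hx' : x' - p ∈ D)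
    (hρx : WithLp.toLp 2 (fun i => ρ (x i) - ρ (q i)) ∈ Dᗮ)
    (hρx' : WithLp.toLp 2 (fun i => ρ (x' i) - ρ (q i)) ∈ Dᗮ) : x = x' := by
  have h_term_pos : ∀ i, x i ≠ x' i → 0 < (x i - x' i) * (ρ (x i) - ρ (x' i)) := by
    intro i hne
    rcases hne.lt_or_gt with h | h
    · exact mul_pos_of_neg_of_neg (sub_neg.2 h) (sub_neg.2 (hρ (hxS i) (hx'S i) h))
    · exact mul_pos (sub_pos.2 h) (sub_pos.2 (hρ (hx'S i) (hxS i) h))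
  have h_inner : ∑ i, (x i - x' i) * (ρ (x i) - ρ (x' i)) = 0 := by
    have := D.inner_right_of_mem_orthogonal (by simpa using D.sub_mem hx hx')
      (Dᗮ.sub_mem hρx hρx')
    simpa [PiLp.inner_apply, mul_comm] using this
  by_contra hne
  obtain ⟨i, hi⟩ : ∃ i, x i ≠ x' i := by
    by_contra! h
    exact hne (PiLp.ext h)
  refine h_inner.not_gt (Finset.sum_pos' (fun j _ => ?_) ⟨i, Finset.mem_univ i, h_term_pos i hi⟩)
  by_cases hj : x j = x' j
  · simp [hj]
  · exact (h_term_pos j hj).le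

end EuclideanSpace

theorem strictMonoOn_log_comp {θ : ℝ → ℝ} (hθ0 : θ 0 = 0) (hθmono : StrictMonoOn θ (Ici 0)) :
    StrictMonoOn (fun t => Real.log (θ t)) (Ioi 0) :=
  Real.strictMonoOn_log.comp (hθmono.mono Ioi_subset_Ici_self) fun t (ht : 0 < t) => by
    simpa [hθ0] using hθmono self_mem_Ici ht.le ht

theorem surjOn_log_comp {θ : ℝ → ℝ} (hθ0 : θ 0 = 0)
    (hθonto : ∀ r : ℝ, 0 ≤ r → ∃ y : ℝ, 0 ≤ y ∧ θ y = r) :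
    SurjOn (fun t => Real.log (θ t)) (Ioi 0) univ := fun r _ => by
  obtain ⟨y, hy, hθy⟩ := hθonto (Real.exp r) (Real.exp_pos r).le
  have hy0 : y ≠ 0 := by
    rintro rfl
    exact (Real.exp_pos r).ne' (hθ0 ▸ hθy).symm
  exact ⟨y, lt_of_le_of_ne hy (Ne.symm hy0), by simp [hθy]⟩

theorem stmt_8_general
    (n : ℕ)
    (θ : ℝ → ℝ)
    (hθ0 : θ 0 = 0)
    (hθmono : StrictMonoOn θ (Set.Ici (0:ℝ)))
    (hθonto : ∀ r : ℝ, 0 ≤ r → ∃ y : ℝ, 0 ≤ y ∧ θ y = r)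
    (D₀ : Submodule ℝ (EuclideanSpace ℝ (Fin n)))
    :
    ∀ p q : EuclideanSpace ℝ (Fin n), (∀ k, 0 < p k) → (∀ k, 0 < q k) →
      ∃! x : EuclideanSpace ℝ (Fin n), (∀ k, 0 < x k) ∧ x - p ∈ D₀ ∧
        ((WithLp.toLp 2 (fun k => Real.log (θ (x k)) - Real.log (θ (q k))) : EuclideanSpace ℝ (Fin n)) ∈ D₀ᗮ) := by
  intro p q hp _
  have hρ := strictMonoOn_log_comp hθ0 hθmono
  obtain ⟨x, hx⟩ := hρ.exists_pos_sub_mem_and_mem_orthogonal (surjOn_log_comp hθ0 hθonto) D₀ hp q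
  exact ⟨x, hx, fun y hy => hρ.eq_of_sub_mem_of_sub_mem_orthogonal D₀ hy.1 hx.1 hy.2.1 hx.2.1
    hy.2.2 hx.2.2⟩

theorem stmt_8
    (n : ℕ) (hn : 0 < n)
    (θ : ℝ → ℝ)
    (hθlip : LocallyLipschitz θ)
    (hθ0 : θ 0 = 0)
    (hθnn : ∀ y : ℝ, 0 ≤ θ y)
    (hθmono : StrictMonoOn θ (Set.Ici (0:ℝ)))
    (hθonto : ∀ r : ℝ, 0 ≤ r → ∃ y : ℝ, 0 ≤ y ∧ θ y = r)
    (hθint : MeasureTheory.IntegrableOn (fun y => |Real.log (θ y)|) (Set.Ioc (0:ℝ) 1))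
    (D₀ : Submodule ℝ (EuclideanSpace ℝ (Fin n)))
    :
    ∀ p q : EuclideanSpace ℝ (Fin n), (∀ k, 0 < p k) → (∀ k, 0 < q k) →
      ∃! x : EuclideanSpace ℝ (Fin n), (∀ k, 0 < x k) ∧ x - p ∈ D₀ ∧
        ((WithLp.toLp 2 (fun k => Real.log (θ (x k)) - Real.log (θ (q k))) : EuclideanSpace ℝ (Fin n)) ∈ D₀ᗮ) :=
  stmt_8_general n θ hθ0 hθmono hθonto D₀
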